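/- Let A be a complex M×N matrix, Y a complex M×L matrix, and μ > 0. If X̂ is a global minimizer of the multiple-snapshot objective G(X) = ‖Y − A X‖_F² + μ·Σᵢ ‖Xᵢ·‖₂, then the beamformed residual R = 2·Aᴴ(Y − A X̂) satisfies ‖Rᵢ·‖₂ ≤ μ for every row index i. -/

import Mathlib

/-! Perturb `X̂` in row `i` alone, along `Rᵢ·`: `X̂ + t • V` with `V = updateRow 0 i Rᵢ·`, `t > 0`.
Since `Re ⟨Y − A X̂, A V⟩_F = Re ⟨Aᴴ (Y − A X̂), V⟩_F = ‖Rᵢ·‖² / 2`, the data term drops by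
`t ‖Rᵢ·‖²` up to `O(t²)`, while by the triangle inequality for rows the penalty grows by at most
`μ t ‖Rᵢ·‖`. Minimality of `X̂` and `t → 0⁺` give `‖Rᵢ·‖² ≤ μ ‖Rᵢ·‖`. -/

open Matrix

/-- The multiple-snapshot (mixed-norm) LASSO objective ‖Y − A X‖_F² + μ Σᵢ ‖Xᵢ·‖₂. -/
noncomputable def msObj {M N L : ℕ} (A : Matrix (Fin M) (Fin N) ℂ)
    (Y : Matrix (Fin M) (Fin L) ℂ) (μ : ℝ) (X : Matrix (Fin N) (Fin L) ℂ) : ℝ :=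
  (∑ i, ∑ j, ‖(Y - A * X) i j‖ ^ 2) + μ * ∑ i, Real.sqrt (∑ j, ‖X i j‖ ^ 2)

/-- The beamformed residual matrix `R = 2 Aᴴ (Y − A X̂)`. -/
noncomputable def msRes {M N L : ℕ} (A : Matrix (Fin M) (Fin N) ℂ)
    (Y : Matrix (Fin M) (Fin L) ℂ) (Xhat : Matrix (Fin N) (Fin L) ℂ) :
    Matrix (Fin N) (Fin L) ℂ :=
  (2 : ℂ) • (Aᴴ * (Y - A * Xhat))

open Filter Topology

theorem le_of_forall_pos_mul_le_mul_add_sq {a b c : ℝ}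
    (h : ∀ t : ℝ, 0 < t → t * a ≤ t * b + t ^ 2 * c) : a ≤ b := by
  have hlim : Tendsto (fun t : ℝ => b + t * c) (𝓝[>] 0) (𝓝 b) := by
    have hcont : Continuous fun t : ℝ => b + t * c := by fun_prop
    exact (hcont.tendsto' 0 b (by simp)).mono_left nhdsWithin_le_nhds
  refine ge_of_tendsto hlim ?_
  filter_upwards [self_mem_nhdsWithin] with t (ht : 0 < t)
  refine le_of_mul_le_mul_left ?_ ht
  linarith [h t ht]

theorem Real.sqrt_le_of_le_mul_sqrt {x c : ℝ} (h : x ≤ c * √x) (hc : 0 ≤ c) : √x ≤ c := by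
  rcases (Real.sqrt_nonneg x).eq_or_lt with h0 | h0
  · rwa [← h0]
  · refine le_of_mul_le_mul_right ?_ h0
    rwa [Real.mul_self_sqrt (Real.sqrt_pos.mp h0).le]

section

variable {𝕜 : Type*} [RCLike 𝕜] {m n l : Type*} [Fintype m] [Fintype n] [Fintype l]

theorem RCLike.norm_sub_smul_sq (x y : 𝕜) (t : ℝ) :
    ‖x - t • y‖ ^ 2 = ‖x‖ ^ 2 - 2 * t * RCLike.re (x * star y) + t ^ 2 * ‖y‖ ^ 2 := by
  have hinner : inner ℝ x y = RCLike.re (x * star y) := by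
    rw [real_inner_eq_re_inner 𝕜, RCLike.inner_apply, ← RCLike.conj_re, map_mul,
      RCLike.conj_conj, mul_comm]
    rfl
  rw [norm_sub_sq_real, real_inner_smul_right, norm_smul, hinner, mul_pow, Real.norm_eq_abs,
    sq_abs]
  ring

theorem Matrix.sum_norm_sq_sub_smul (E W : Matrix m l 𝕜) (t : ℝ) :
    ∑ a, ∑ j, ‖(E - t • W) a j‖ ^ 2 =
      ∑ a, ∑ j, ‖E a j‖ ^ 2 - 2 * t * RCLike.re (trace (E * Wᴴ)) +
        t ^ 2 * ∑ a, ∑ j, ‖W a j‖ ^ 2 := by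
  simp only [sub_apply, smul_apply, RCLike.norm_sub_smul_sq, Finset.sum_add_distrib,
    Finset.sum_sub_distrib, ← Finset.mul_sum, trace, diag, mul_apply, conjTranspose_apply,
    map_sum]

theorem Matrix.trace_mul_conjTranspose_updateRow_zero [DecidableEq n] (B : Matrix n l 𝕜) (i : n)
    (v : l → 𝕜) : trace (B * (updateRow 0 i v)ᴴ) = ∑ j, B i j * star (v j) := by
  simp only [trace, diag, mul_apply, conjTranspose_apply]
  rw [Fintype.sum_eq_single i]
  · simp
  · intro k hk
    simp [updateRow_ne hk]

theorem Matrix.re_trace_mul_conjTranspose_updateRow_zero_self [DecidableEq n] (B : Matrix n l 𝕜)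
    (i : n) : RCLike.re (trace (B * (updateRow 0 i (B i))ᴴ)) = ∑ j, ‖B i j‖ ^ 2 := by
  simp only [trace_mul_conjTranspose_updateRow_zero, RCLike.star_def, RCLike.mul_conj, map_sum]
  norm_cast

noncomputable def mixedNorm (X : Matrix n l 𝕜) : ℝ :=
  ∑ k, √(∑ j, ‖X k j‖ ^ 2)

theorem mixedNorm_eq_sum_norm (X : Matrix n l 𝕜) :
    mixedNorm X = ∑ k, ‖(WithLp.toLp 2 (X k) : EuclideanSpace 𝕜 l)‖ := by
  simp only [mixedNorm, EuclideanSpace.norm_eq]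

theorem mixedNorm_add_le (X X' : Matrix n l 𝕜) :
    mixedNorm (X + X') ≤ mixedNorm X + mixedNorm X' := by
  simp only [mixedNorm_eq_sum_norm, ← Finset.sum_add_distrib]
  refine Finset.sum_le_sum fun k _ => ?_
  rw [show (X + X') k = X k + X' k from rfl, WithLp.toLp_add]
  exact norm_add_le _ _

theorem mixedNorm_smul (t : ℝ) (X : Matrix n l 𝕜) : mixedNorm (t • X) = |t| * mixedNorm X := by
  simp only [mixedNorm_eq_sum_norm, Finset.mul_sum]
  refine Finset.sum_congr rfl fun k _ => ?_
  rw [show (t • X) k = t • X k from rfl, WithLp.toLp_smul, norm_smul, Real.norm_eq_abs]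

theorem mixedNorm_updateRow_zero [DecidableEq n] (i : n) (v : l → 𝕜) :
    mixedNorm (updateRow 0 i v) = √(∑ j, ‖v j‖ ^ 2) := by
  rw [mixedNorm, Fintype.sum_eq_single i]
  · simp
  · intro k hk
    simp [updateRow_ne hk]

end

theorem msObj_eq {M N L : ℕ} (A : Matrix (Fin M) (Fin N) ℂ) (Y : Matrix (Fin M) (Fin L) ℂ) (μ : ℝ)
    (X : Matrix (Fin N) (Fin L) ℂ) :
    msObj A Y μ X = ∑ a, ∑ j, ‖(Y - A * X) a j‖ ^ 2 + μ * mixedNorm X :=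
  rfl

theorem msObj_add_smul_updateRow_msRes_le {M N L : ℕ} (A : Matrix (Fin M) (Fin N) ℂ)
    (Y : Matrix (Fin M) (Fin L) ℂ) {μ : ℝ} (hμ : 0 ≤ μ) (X : Matrix (Fin N) (Fin L) ℂ)
    (i : Fin N) {t : ℝ} (ht : 0 ≤ t) :
    msObj A Y μ (X + t • updateRow 0 i (msRes A Y X i)) ≤
      msObj A Y μ X - t * ∑ j, ‖msRes A Y X i j‖ ^ 2 +
        t ^ 2 * ∑ a, ∑ j, ‖(A * updateRow 0 i (msRes A Y X i)) a j‖ ^ 2 +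
          t * (μ * √(∑ j, ‖msRes A Y X i j‖ ^ 2)) := by
  set R := msRes A Y X with hR
  set V := updateRow 0 i (R i)
  have hresidual : Y - A * (X + t • V) = (Y - A * X) - t • (A * V) := by
    rw [Matrix.mul_add, Matrix.mul_smul]
    abel
  have hcross : 2 * RCLike.re (trace ((Y - A * X) * (A * V)ᴴ)) = ∑ j, ‖R i j‖ ^ 2 := by
    have hadjoint : trace ((Y - A * X) * (A * V)ᴴ) = trace (Aᴴ * (Y - A * X) * Vᴴ) := by
      rw [conjTranspose_mul, ← Matrix.mul_assoc, trace_mul_comm, ← Matrix.mul_assoc]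
    have hscale : R * Vᴴ = (2 : ℂ) • (Aᴴ * (Y - A * X) * Vᴴ) := by
      rw [hR, msRes, Matrix.smul_mul]
    rw [← re_trace_mul_conjTranspose_updateRow_zero_self R i, hadjoint]
    change _ = RCLike.re (trace (R * Vᴴ))
    rw [hscale, trace_smul]
    simp
  have hpenalty : mixedNorm (X + t • V) ≤ mixedNorm X + t * √(∑ j, ‖R i j‖ ^ 2) :=
    calc mixedNorm (X + t • V) ≤ mixedNorm X + mixedNorm (t • V) := mixedNorm_add_le _ _
      _ = mixedNorm X + t * √(∑ j, ‖R i j‖ ^ 2) := by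
        rw [mixedNorm_smul, mixedNorm_updateRow_zero, abs_of_nonneg ht]
  rw [msObj_eq, msObj_eq, hresidual, sum_norm_sq_sub_smul, mul_right_comm 2 t, hcross]
  linarith [mul_le_mul_of_nonneg_left hpenalty hμ]

/-- At a global multiple-snapshot LASSO minimizer, the Euclidean norm of every row of
the beamformed residual matrix is at most μ. -/
theorem ms_residual_bounded {M N L : ℕ} (A : Matrix (Fin M) (Fin N) ℂ)
    (Y : Matrix (Fin M) (Fin L) ℂ) (μ : ℝ) (hμ : 0 < μ) (Xhat : Matrix (Fin N) (Fin L) ℂ)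
    (hmin : ∀ X : Matrix (Fin N) (Fin L) ℂ, msObj A Y μ Xhat ≤ msObj A Y μ X) :
    ∀ i : Fin N, Real.sqrt (∑ j, ‖msRes A Y Xhat i j‖ ^ 2) ≤ μ := by
  intro i
  set R := msRes A Y Xhat
  set V := updateRow 0 i (R i)
  have hdescent : ∀ t : ℝ, 0 < t → t * ∑ j, ‖R i j‖ ^ 2 ≤
      t * (μ * √(∑ j, ‖R i j‖ ^ 2)) + t ^ 2 * ∑ a, ∑ j, ‖(A * V) a j‖ ^ 2 := fun t ht => by
    have := msObj_add_smul_updateRow_msRes_le A Y hμ.le Xhat i ht.le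
    linarith [hmin (Xhat + t • V)]
  exact Real.sqrt_le_of_le_mul_sqrt (le_of_forall_pos_mul_le_mul_add_sq hdescent) hμ.le
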